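/- For all integers s ≥ 1 and 0 ≤ l ≤ s there exists a constant C > 0, depending only on s and l, such that for every C^∞ function u : ℝ → ℝ with u(x+1) = u(x) for all x, one has |∫₀¹ ∂ₓˡu(x) · ∂ₓ^{s−l}u(x) · ∂ₓˢu(x) dx| ≤ C · (∫₀¹ (∂ₓˢu(x))² dx) · sup over x of |u(x)|. -/

import Mathlib

/-!
Write `b_j = ‖∂ʲu‖_{L^{2s/j}(0,1)}`, with `b_0 = sup |u|`. With `p = 2s/(j+1)`, integrating
`∫ |∂ʲ⁺¹u|^p = ∫ ∂ʲ⁺¹u · |∂ʲ⁺¹u|^{p-2} ∂ʲ⁺¹u` by parts (periodicity kills the boundary terms) and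
applying Hölder's inequality twice gives `b_{j+1}² ≤ 2s b_j b_{j+2}`. This log-convexity yields
`b_l b_{s-l} ≤ (2s)^{l(s-l)} b_0 b_s`, and by Cauchy–Schwarz and Hölder the trilinear integral is
at most `b_l b_{s-l} b_s`, while `b_s² = ∫ (∂ˢu)²`.
-/

open MeasureTheory Set Filter Topology intervalIntegral

lemma hasDerivAt_abs_rpow_mul_self {q : ℝ} (hq : 0 < q) (x : ℝ) :
    HasDerivAt (fun y : ℝ => |y| ^ q * y) ((q + 1) * |x| ^ q) x := by
  rcases eq_or_ne x 0 with rfl | hx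
  · rw [hasDerivAt_iff_tendsto_slope]
    have hslope : slope (fun y : ℝ => |y| ^ q * y) 0 =ᶠ[𝓝[≠] 0] fun y => |y| ^ q := by
      filter_upwards [self_mem_nhdsWithin] with y hy
      have hy : y ≠ 0 := hy
      simp only [slope, sub_zero, abs_zero, Real.zero_rpow hq.ne', mul_zero, vsub_eq_sub,
        smul_eq_mul]
      field_simp
    have hcont : Tendsto (fun y : ℝ => |y| ^ q) (𝓝 0) (𝓝 (|0| ^ q)) :=
      (continuous_abs.rpow_const fun _ => Or.inr hq.le).tendsto 0
    simpa [Real.zero_rpow hq.ne'] using (hcont.mono_left nhdsWithin_le_nhds).congr' hslope.symm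
  · have habs : HasDerivAt (fun y : ℝ => |y| ^ q) (SignType.sign x * q * |x| ^ (q - 1)) x := by
      simpa using (hasDerivAt_abs hx).rpow_const (p := q) (Or.inl (abs_ne_zero.2 hx))
    refine (habs.mul (hasDerivAt_id' x)).congr_deriv ?_
    have hsign : (SignType.sign x : ℝ) * x = |x| := by
      rcases hx.lt_or_gt with h | h <;> simp [h, abs_of_neg, abs_of_pos]
    rw [Real.rpow_sub_one (abs_ne_zero.2 hx), mul_right_comm _ _ x, mul_right_comm _ _ x, hsign]
    field_simp

lemma mul_abs_rpow_sub_two_mul_self {p : ℝ} (hp : p ≠ 0) (y : ℝ) :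
    y * (|y| ^ (p - 2) * y) = |y| ^ p := by
  rcases eq_or_ne y 0 with rfl | hy
  · simp [Real.zero_rpow hp]
  · rw [Real.rpow_sub (abs_pos.2 hy), Real.rpow_two, sq_abs]
    field_simp

theorem Function.Periodic.deriv {𝕜 F : Type*} [NontriviallyNormedField 𝕜] [NormedAddCommGroup F]
    [NormedSpace 𝕜 F] {f : 𝕜 → F} {c : 𝕜} (h : Function.Periodic f c) :
    Function.Periodic (deriv f) c := fun x => by
  rw [← deriv_comp_add_const, show (fun y => f (y + c)) = f from funext h]

theorem Function.Periodic.iteratedDeriv {𝕜 F : Type*} [NontriviallyNormedField 𝕜]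
    [NormedAddCommGroup F] [NormedSpace 𝕜 F] {f : 𝕜 → F} {c : 𝕜} (h : Function.Periodic f c)
    (n : ℕ) : Function.Periodic (iteratedDeriv n f) c := by
  induction n with
  | zero => simpa using h
  | succ n ih => simpa [iteratedDeriv_succ] using ih.deriv

theorem Function.Periodic.abs_le_iSup_abs {f : ℝ → ℝ} {c : ℝ} (h : Function.Periodic f c)
    (hc : c ≠ 0) (hf : Continuous f) (x : ℝ) : |f x| ≤ ⨆ y, |f y| :=
  le_ciSup ((h.comp abs).compact_of_continuous hc hf.abs).bddAbove x

noncomputable def intervalLpNorm (a b p : ℝ) (f : ℝ → ℝ) : ℝ :=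
  (∫ x in a..b, |f x| ^ p) ^ p⁻¹

section IntervalLpNorm

variable {a b p q r M : ℝ} {f g : ℝ → ℝ}

lemma integral_abs_rpow_nonneg (hab : a ≤ b) (f : ℝ → ℝ) (p : ℝ) :
    0 ≤ ∫ x in a..b, |f x| ^ p :=
  integral_nonneg hab fun _ _ => Real.rpow_nonneg (abs_nonneg _) _

lemma intervalLpNorm_nonneg (hab : a ≤ b) (f : ℝ → ℝ) (p : ℝ) : 0 ≤ intervalLpNorm a b p f :=
  Real.rpow_nonneg (integral_abs_rpow_nonneg hab f p) _

lemma intervalLpNorm_rpow (hab : a ≤ b) (hp : p ≠ 0) (f : ℝ → ℝ) :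
    intervalLpNorm a b p f ^ p = ∫ x in a..b, |f x| ^ p :=
  Real.rpow_inv_rpow (integral_abs_rpow_nonneg hab f p) hp

lemma intervalLpNorm_two_sq (hab : a ≤ b) (f : ℝ → ℝ) :
    intervalLpNorm a b 2 f ^ 2 = ∫ x in a..b, f x ^ 2 := by
  rw [← Real.rpow_two, intervalLpNorm_rpow hab two_ne_zero]
  simp only [Real.rpow_two, sq_abs]

lemma intervalLpNorm_abs_rpow (hab : a ≤ b) (hr : r ≠ 0) (f : ℝ → ℝ) (p : ℝ) :
    intervalLpNorm a b p (fun x => |f x| ^ r) = intervalLpNorm a b (r * p) f ^ r := by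
  have hpow : ∀ x, |(|f x| ^ r)| ^ p = |f x| ^ (r * p) := fun x => by
    rw [abs_of_nonneg (Real.rpow_nonneg (abs_nonneg _) _), ← Real.rpow_mul (abs_nonneg _)]
  rw [intervalLpNorm, intervalLpNorm, funext hpow,
    ← Real.rpow_mul (integral_abs_rpow_nonneg hab f _), mul_inv, mul_right_comm, inv_mul_cancel₀ hr, one_mul]

lemma integral_abs_mul_le_intervalLpNorm_mul (hab : a ≤ b) (hf : Continuous f) (hg : Continuous g)
    (hpq : p.HolderConjugate q) :
    ∫ x in a..b, |f x * g x| ≤ intervalLpNorm a b p f * intervalLpNorm a b q g := by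
  simp only [intervalLpNorm, integral_of_le hab, abs_mul, ← one_div]
  have hmem : ∀ {h : ℝ → ℝ}, Continuous h →
      ∀ r, MemLp h (ENNReal.ofReal r) (volume.restrict (Ioc a b)) :=
    fun {h} hh r => by
      obtain ⟨C, hC⟩ := isCompact_Icc.exists_bound_of_continuousOn (s := Icc a b) hh.continuousOn
      refine MemLp.of_bound hh.aestronglyMeasurable C ?_
      filter_upwards [ae_restrict_mem measurableSet_Ioc] with x hx
        using hC x (Ioc_subset_Icc_self hx)
  exact integral_mul_le_Lp_mul_Lq_of_nonneg hpq (.of_forall fun _ => abs_nonneg _)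
    (.of_forall fun _ => abs_nonneg _) (hmem hf.abs p) (hmem hg.abs q)

lemma intervalLpNorm_le_of_integral_le (hab : a ≤ b) (hp : 0 < p) (hM : 0 ≤ M)
    (h : ∫ x in a..b, |f x| ^ p ≤ M ^ p) : intervalLpNorm a b p f ≤ M := by
  rwa [← Real.rpow_le_rpow_iff (intervalLpNorm_nonneg hab f p) hM hp,
    intervalLpNorm_rpow hab hp.ne']

lemma intervalLpNorm_mul_le (hab : a ≤ b) (hf : Continuous f) (hg : Continuous g)
    (hpqr : p.HolderTriple q r) :
    intervalLpNorm a b r (f * g) ≤ intervalLpNorm a b p f * intervalLpNorm a b q g := by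
  have hr := hpqr.pos'
  refine intervalLpNorm_le_of_integral_le hab hr
    (mul_nonneg (intervalLpNorm_nonneg hab f p) (intervalLpNorm_nonneg hab g q)) ?_
  have hpow : ∀ x, |(f * g) x| ^ r = |(|f x| ^ r) * (|g x| ^ r)| := fun x => by
    have h0 : 0 ≤ |f x| ^ r * |g x| ^ r := by positivity
    rw [abs_of_nonneg h0, ← Real.mul_rpow (abs_nonneg _) (abs_nonneg _), ← abs_mul]
    rfl
  calc ∫ x in a..b, |(f * g) x| ^ r
      ≤ intervalLpNorm a b (p / r) (fun x => |f x| ^ r)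
          * intervalLpNorm a b (q / r) (fun x => |g x| ^ r) := by
        simp only [hpow]
        exact integral_abs_mul_le_intervalLpNorm_mul hab (hf.abs.rpow_const fun _ => Or.inr hr.le)
          (hg.abs.rpow_const fun _ => Or.inr hr.le) hpqr.holderConjugate_div_div
    _ = (intervalLpNorm a b p f * intervalLpNorm a b q g) ^ r := by
        rw [intervalLpNorm_abs_rpow hab hr.ne', intervalLpNorm_abs_rpow hab hr.ne',
          mul_div_cancel₀ _ hr.ne', mul_div_cancel₀ _ hr.ne',
          Real.mul_rpow (intervalLpNorm_nonneg hab f p) (intervalLpNorm_nonneg hab g q)]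

lemma intervalLpNorm_mul_le_of_abs_le (hab : a ≤ b) (hp : 0 < p) (hf : Continuous f)
    (hg : Continuous g) (hM : ∀ x ∈ Icc a b, |f x| ≤ M) :
    intervalLpNorm a b p (f * g) ≤ M * intervalLpNorm a b p g := by
  have hM0 : 0 ≤ M := (abs_nonneg _).trans (hM a (left_mem_Icc.2 hab))
  refine intervalLpNorm_le_of_integral_le hab hp
    (mul_nonneg hM0 (intervalLpNorm_nonneg hab g p)) ?_
  rw [Real.mul_rpow hM0 (intervalLpNorm_nonneg hab g p), intervalLpNorm_rpow hab hp.ne',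
    ← intervalIntegral.integral_const_mul]
  refine integral_mono_on hab
    (((hf.mul hg).abs.rpow_const fun _ => Or.inr hp.le).intervalIntegrable a b)
    ((continuous_const.mul (hg.abs.rpow_const fun _ => Or.inr hp.le)).intervalIntegrable a b)
    fun x hx => ?_
  rw [Pi.mul_apply, abs_mul, Real.mul_rpow (abs_nonneg _) (abs_nonneg _)]
  gcongr
  exact hM x hx

lemma integral_abs_deriv_rpow_eq (hf : ContDiff ℝ 2 f) (hfab : f a = f b)
    (hf'ab : deriv f a = deriv f b) (hp : 2 < p) :
    ∫ x in a..b, |deriv f x| ^ p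
      = -((p - 1) * ∫ x in a..b, f x * (|deriv f x| ^ (p - 2) * deriv (deriv f) x)) := by
  obtain ⟨hdf, -, hf'⟩ := contDiff_succ_iff_deriv.1 (show ContDiff ℝ (1 + 1) f from hf)
  have hdf' : Differentiable ℝ (deriv f) := hf'.differentiable one_ne_zero
  set v : ℝ → ℝ := fun x => |deriv f x| ^ (p - 2) * deriv f x
  have hv : ∀ x, HasDerivAt v ((p - 1) * (|deriv f x| ^ (p - 2) * deriv (deriv f) x)) x := by
    intro x
    exact ((hasDerivAt_abs_rpow_mul_self (by linarith : 0 < p - 2) (deriv f x)).comp x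
      (hdf' x).hasDerivAt).congr_deriv (by ring)
  have hcont_v' : Continuous fun x => (p - 1) * (|deriv f x| ^ (p - 2) * deriv (deriv f) x) :=
    continuous_const.mul ((hf'.continuous.abs.rpow_const fun _ => Or.inr (by linarith)).mul
      (hf'.continuous_deriv le_rfl))
  have hibp := integral_mul_deriv_eq_deriv_mul (fun x _ => (hdf x).hasDerivAt) (fun x _ => hv x)
    (hf'.continuous.intervalIntegrable a b) (hcont_v'.intervalIntegrable a b)
  simp only [v, hfab, hf'ab, sub_self, zero_sub,
    mul_abs_rpow_sub_two_mul_self (by linarith : p ≠ 0)] at hibp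
  have hcomm : ∫ x in a..b, (p - 1) * (f x * (|deriv f x| ^ (p - 2) * deriv (deriv f) x))
      = ∫ x in a..b, f x * ((p - 1) * (|deriv f x| ^ (p - 2) * deriv (deriv f) x)) := by
    congr 1 with x
    ring
  rw [← intervalIntegral.integral_const_mul, hcomm, hibp, neg_neg]

lemma intervalLpNorm_deriv_sq_le (hab : a ≤ b) (hf : ContDiff ℝ 2 f) (hfab : f a = f b)
    (hf'ab : deriv f a = deriv f b) (hp : 2 < p) :
    intervalLpNorm a b p (deriv f) ^ 2
      ≤ (p - 1) * intervalLpNorm a b (p / 2) (f * deriv (deriv f)) := by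
  set L := intervalLpNorm a b p (deriv f)
  set N := intervalLpNorm a b (p / 2) (f * deriv (deriv f))
  have hL : 0 ≤ L := intervalLpNorm_nonneg hab _ _
  have hp2 : 0 < p - 2 := by linarith
  have hf' : ContDiff ℝ 1 (deriv f) := hf.deriv' (n := 1)
  have hconj : (p / (p - 2)).HolderConjugate (p / 2) := by
    rw [Real.holderConjugate_iff]
    refine ⟨(one_lt_div hp2).2 (by linarith), ?_⟩
    field_simp
    ring
  have key : L ^ p ≤ (p - 1) * (L ^ (p - 2) * N) :=
    calc L ^ p = ∫ x in a..b, |deriv f x| ^ p := intervalLpNorm_rpow hab (by linarith) _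
      _ = -((p - 1) * ∫ x in a..b, f x * (|deriv f x| ^ (p - 2) * deriv (deriv f) x)) :=
          integral_abs_deriv_rpow_eq hf hfab hf'ab hp
      _ ≤ (p - 1) * ∫ x in a..b, |(|deriv f x| ^ (p - 2)) * (f * deriv (deriv f)) x| := by
          rw [← mul_neg]
          gcongr
          · linarith
          refine (neg_le_abs _).trans ((abs_integral_le_integral_abs hab).trans_eq ?_)
          congr 1 with x
          rw [Pi.mul_apply, mul_left_comm]
      _ ≤ (p - 1) * (intervalLpNorm a b (p / (p - 2)) (fun x => |deriv f x| ^ (p - 2)) * N) := by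
          gcongr
          · linarith
          exact integral_abs_mul_le_intervalLpNorm_mul hab
            (hf'.continuous.abs.rpow_const fun _ => Or.inr hp2.le)
            (hf.continuous.mul (hf'.continuous_deriv le_rfl)) hconj
      _ = (p - 1) * (L ^ (p - 2) * N) := by
          rw [intervalLpNorm_abs_rpow hab hp2.ne', mul_div_cancel₀ _ hp2.ne']
  rcases hL.eq_or_lt with hL0 | hLpos
  · rw [← hL0, zero_pow two_ne_zero]
    exact mul_nonneg (by linarith) (intervalLpNorm_nonneg hab _ _)
  · have hsplit : L ^ p = L ^ (p - 2) * L ^ 2 := by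
      rw [← Real.rpow_two, ← Real.rpow_add hLpos, sub_add_cancel]
    rw [hsplit, mul_left_comm] at key
    exact le_of_mul_le_mul_left key (Real.rpow_pos_of_pos hLpos _)

end IntervalLpNorm

section LogConvexChain

variable {c : ℕ → ℝ} {K : ℝ} {s : ℕ}

lemma succ_mul_le_pow_mul_succ (hc : ∀ j, 0 ≤ c j) (hK : 0 ≤ K)
    (h : ∀ j, j + 2 ≤ s → c (j + 1) ^ 2 ≤ K * (c j * c (j + 2))) {i j : ℕ} (hij : i ≤ j)
    (hjs : j + 1 ≤ s) : c (i + 1) * c j ≤ K ^ (j - i) * (c i * c (j + 1)) := by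
  induction j, hij using Nat.le_induction with
  | base => simp [mul_comm]
  | succ j hij ih =>
    rcases (hc (j + 1)).eq_or_lt with h0 | hpos
    · rw [← h0, mul_zero]
      exact mul_nonneg (pow_nonneg hK _) (mul_nonneg (hc _) (hc _))
    refine le_of_mul_le_mul_right ?_ hpos
    calc c (i + 1) * c (j + 1) * c (j + 1) = c (i + 1) * c (j + 1) ^ 2 := by ring
      _ ≤ c (i + 1) * (K * (c j * c (j + 2))) :=
          mul_le_mul_of_nonneg_left (h j (by omega)) (hc _)
      _ = K * c (j + 2) * (c (i + 1) * c j) := by ring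
      _ ≤ K * c (j + 2) * (K ^ (j - i) * (c i * c (j + 1))) :=
          mul_le_mul_of_nonneg_left (ih (by omega)) (mul_nonneg hK (hc _))
      _ = K ^ (j + 1 - i) * (c i * c (j + 1 + 1)) * c (j + 1) := by
          rw [show j + 1 - i = j - i + 1 by omega, pow_succ]
          ring

lemma mul_le_pow_mul_add (hc : ∀ j, 0 ≤ c j) (hK : 0 ≤ K)
    (h : ∀ j, j + 2 ≤ s → c (j + 1) ^ 2 ≤ K * (c j * c (j + 2))) {l n : ℕ} (hln : l ≤ n)
    (hs : l + n ≤ s) : c l * c n ≤ K ^ (l * n) * (c 0 * c (l + n)) := by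
  induction l generalizing n with
  | zero => simp
  | succ l ih =>
    obtain ⟨d, rfl⟩ := Nat.exists_eq_add_of_le hln
    calc c (l + 1) * c (l + 1 + d) ≤ K ^ (d + 1) * (c l * c (l + 1 + d + 1)) := by
          have := succ_mul_le_pow_mul_succ hc hK h (i := l) (j := l + 1 + d) (by omega) (by omega)
          rwa [show l + 1 + d - l = d + 1 by omega] at this
      _ ≤ K ^ (d + 1) * (K ^ (l * (l + 1 + d + 1)) * (c 0 * c (l + (l + 1 + d + 1)))) :=
          mul_le_mul_of_nonneg_left (ih (by omega) (by omega)) (pow_nonneg hK _)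
      _ = K ^ ((l + 1) * (l + 1 + d)) * (c 0 * c (l + 1 + (l + 1 + d))) := by
          rw [← mul_assoc, ← pow_add]
          ring_nf

lemma mul_sub_le_pow_mul (hc : ∀ j, 0 ≤ c j) (hK : 0 ≤ K)
    (h : ∀ j, j + 2 ≤ s → c (j + 1) ^ 2 ≤ K * (c j * c (j + 2))) {l : ℕ} (hl : l ≤ s) :
    c l * c (s - l) ≤ K ^ (l * (s - l)) * (c 0 * c s) := by
  rcases le_total l (s - l) with hle | hle
  · simpa [Nat.add_sub_cancel' hl] using mul_le_pow_mul_add hc hK h hle (by omega)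
  · have := mul_le_pow_mul_add hc hK h hle (by omega)
    rwa [Nat.sub_add_cancel hl, mul_comm, mul_comm (s - l)] at this

end LogConvexChain

section GagliardoNirenberg

open scoped ContDiff

/-- `gnNorm s u j = ‖∂ʲu‖_{L^{2s/j}(0,1)}`, where `j = 0` stands for the exponent `2s/0 = ∞`
(the supremum of `|u|`). -/
noncomputable def gnNorm (s : ℕ) (u : ℝ → ℝ) (j : ℕ) : ℝ :=
  if j = 0 then ⨆ x, |u x| else intervalLpNorm 0 1 (2 * s / j) (iteratedDeriv j u)

variable {u : ℝ → ℝ} {s : ℕ}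

lemma gnNorm_nonneg (s : ℕ) (u : ℝ → ℝ) (j : ℕ) : 0 ≤ gnNorm s u j := by
  unfold gnNorm
  split_ifs
  · exact Real.iSup_nonneg fun _ => abs_nonneg _
  · exact intervalLpNorm_nonneg zero_le_one _ _

lemma intervalLpNorm_iteratedDeriv_mul_le (hu : ContDiff ℝ ∞ u) (hper : Function.Periodic u 1)
    (hs : s ≠ 0) {j k : ℕ} (hjk : j + k ≠ 0) :
    intervalLpNorm 0 1 (2 * s / (j + k)) (iteratedDeriv j u * iteratedDeriv k u)
      ≤ gnNorm s u j * gnNorm s u k := by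
  have hD : ∀ i, Continuous (iteratedDeriv i u) :=
    fun i => hu.continuous_iteratedDeriv i (mod_cast le_top)
  have hsup : ∀ x ∈ Icc (0 : ℝ) 1, |u x| ≤ ⨆ y, |u y| :=
    fun x _ => hper.abs_le_iSup_abs one_ne_zero hu.continuous x
  have hs' : (0 : ℝ) < s := by positivity
  rcases eq_or_ne j 0 with rfl | hj
  · have hk : k ≠ 0 := by omega
    simp only [gnNorm, if_pos, if_neg hk, iteratedDeriv_zero, Nat.cast_zero, zero_add]
    exact intervalLpNorm_mul_le_of_abs_le zero_le_one (by positivity) hu.continuous (hD k) hsup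
  rcases eq_or_ne k 0 with rfl | hk
  · simp only [gnNorm, if_pos, if_neg hj, iteratedDeriv_zero, Nat.cast_zero, add_zero]
    rw [mul_comm (iteratedDeriv j u), mul_comm (intervalLpNorm _ _ _ _)]
    exact intervalLpNorm_mul_le_of_abs_le zero_le_one (by positivity) hu.continuous (hD j) hsup
  simp only [gnNorm, if_neg hj, if_neg hk]
  refine intervalLpNorm_mul_le zero_le_one (hD j) (hD k) ⟨?_, by positivity, by positivity⟩
  field_simp

lemma gnNorm_succ_sq_le (hu : ContDiff ℝ ∞ u) (hper : Function.Periodic u 1) {j : ℕ}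
    (hj : j + 2 ≤ s) : gnNorm s u (j + 1) ^ 2 ≤ 2 * s * (gnNorm s u j * gnNorm s u (j + 2)) := by
  have hjs : (j : ℝ) + 2 ≤ s := by exact_mod_cast hj
  set p : ℝ := 2 * s / (j + 1)
  have hp : 2 < p := by rw [lt_div_iff₀ (by positivity)]; linarith
  have hps : p ≤ 2 * s := div_le_self (by positivity) (by linarith [(j.cast_nonneg : (0 : ℝ) ≤ j)])
  set f := iteratedDeriv j u
  have hf : ContDiff ℝ 2 f := by
    rw [show f = deriv^[j] u from iteratedDeriv_eq_iterate]
    exact contDiff_infty.1 (hu.iterate_deriv j) 2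
  have hfab : f 0 = f 1 := by simpa using (hper.iteratedDeriv j 0).symm
  have hf'ab : deriv f 0 = deriv f 1 := by
    simpa [f, ← iteratedDeriv_succ] using (hper.iteratedDeriv (j + 1) 0).symm
  calc gnNorm s u (j + 1) ^ 2 = intervalLpNorm 0 1 p (deriv f) ^ 2 := by
        simp [gnNorm, p, f, iteratedDeriv_succ]
    _ ≤ (p - 1) * intervalLpNorm 0 1 (p / 2) (f * deriv (deriv f)) :=
        intervalLpNorm_deriv_sq_le zero_le_one hf hfab hf'ab hp
    _ = (p - 1) * intervalLpNorm 0 1 (2 * s / (j + (j + 2 : ℕ)))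
          (iteratedDeriv j u * iteratedDeriv (j + 2) u) := by
        rw [iteratedDeriv_succ, iteratedDeriv_succ]
        congr 2
        simp only [p]
        push_cast
        field_simp
        ring
    _ ≤ (p - 1) * (gnNorm s u j * gnNorm s u (j + 2)) := by
        gcongr
        · linarith
        exact intervalLpNorm_iteratedDeriv_mul_le hu hper (by omega) (by omega)
    _ ≤ 2 * s * (gnNorm s u j * gnNorm s u (j + 2)) := by
        gcongr
        · exact mul_nonneg (gnNorm_nonneg s u j) (gnNorm_nonneg s u _)
        linarith

lemma gnNorm_self (hs : s ≠ 0) : gnNorm s u s = intervalLpNorm 0 1 2 (iteratedDeriv s u) := by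
  simp [gnNorm, hs]

end GagliardoNirenberg

/-- trilinear Gagliardo–Nirenberg-type estimate for smooth 1-periodic
functions: `|∫ ∂ₓˡu ∂ₓ^{s-l}u ∂ₓˢu| ≤ C (∫ (∂ₓˢu)²) ‖u‖_{L^∞}`. -/
theorem trilinear_gagliardo_nirenberg
    (s l : ℕ) (hs : 1 ≤ s) (hl : l ≤ s) :
    ∃ C : ℝ, 0 < C ∧ ∀ u : ℝ → ℝ, ContDiff ℝ (⊤ : ℕ∞) u → (∀ x, u (x + 1) = u x) →
      |∫ x in (0:ℝ)..1,
          iteratedDeriv l u x * iteratedDeriv (s - l) u x * iteratedDeriv s u x|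
        ≤ C * (∫ x in (0:ℝ)..1, (iteratedDeriv s u x) ^ 2) * (⨆ x : ℝ, |u x|) := by
  refine ⟨(2 * s) ^ (l * (s - l)), by positivity, fun u hu hper => ?_⟩
  have hs0 : s ≠ 0 := by omega
  have hD : ∀ i, Continuous (iteratedDeriv i u) :=
    fun i => hu.continuous_iteratedDeriv i (mod_cast le_top)
  have hprod := intervalLpNorm_iteratedDeriv_mul_le hu hper hs0 (j := l) (k := s - l) (by omega)
  rw [← Nat.cast_add, Nat.add_sub_cancel' hl, mul_div_cancel_right₀ _ (by simpa)] at hprod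
  have hchain := mul_sub_le_pow_mul (gnNorm_nonneg s u) (by positivity)
    (fun j hj => gnNorm_succ_sq_le hu hper hj) hl
  calc _ ≤ ∫ x in (0:ℝ)..1,
        |(iteratedDeriv l u * iteratedDeriv (s - l) u) x * iteratedDeriv s u x| :=
        abs_integral_le_integral_abs zero_le_one
    _ ≤ intervalLpNorm 0 1 2 (iteratedDeriv l u * iteratedDeriv (s - l) u) * gnNorm s u s := by
        rw [gnNorm_self hs0]
        exact integral_abs_mul_le_intervalLpNorm_mul zero_le_one ((hD l).mul (hD _)) (hD s)
          Real.HolderConjugate.two_two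
    _ ≤ (2 * s) ^ (l * (s - l)) * (gnNorm s u 0 * gnNorm s u s) * gnNorm s u s := by
        gcongr
        · exact gnNorm_nonneg s u s
        exact hprod.trans hchain
    _ = _ := by
        rw [mul_assoc, mul_assoc, ← sq, gnNorm_self hs0, intervalLpNorm_two_sq zero_le_one]
        simp only [gnNorm, if_pos]
        ring
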